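/- arXiv:2111.14272 — 2 statements merged into one kernel-verified Lean document; each statement's English description precedes it below -/
import Mathlib

section
/- Let X be a finite sample space with distribution P, L a partition of X, t : X → ℝ, T(x) = E[t | l(x)], and T̂ a random function constant on cells with E[T̂|l] = T|l, independent of x. Then E_{x∼P}[(t(x) − T̂(x))² − t(x)²] = −E_{x∼P}[T̂(x)²] + 2·E_{x∼P}[Var(T̂(x))], where E on the left also averages over the randomness of T̂. -/
/-- Theorem 1 of the paper: For an unbiased cell-wise estimator T̂ of T,
E_{x,ω}[(t(x) - T̂_ω(x))^2 - t(x)^2] = -E_{x,ω}[T̂_ω(x)^2] + 2 E_x[Var(T̂(x))]. -/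
theorem stmt_3 {X ι Ω : Type*} [Fintype X] [Fintype Ω] [DecidableEq ι]
    (p : X → ℝ) (hp : ∀ x, 0 ≤ p x) (hpsum : ∑ x, p x = 1)
    (q : Ω → ℝ) (hq : ∀ ω, 0 ≤ q ω) (hqsum : ∑ ω, q ω = 1)
    (part : X → ι) (t T : X → ℝ)
    (hconst : ∀ x y, part x = part y → T x = T y)
    (hmean : ∀ x, ∑ y ∈ Finset.univ.filter (fun y => part y = part x), p y * t y
      = (∑ y ∈ Finset.univ.filter (fun y => part y = part x), p y) * T x)
    (That : Ω → X → ℝ)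
    (hThatconst : ∀ ω, ∀ x y, part x = part y → That ω x = That ω y)
    (hunbiased : ∀ x, ∑ ω, q ω * That ω x = T x) :
    ∑ x, p x * (∑ ω, q ω * ((t x - That ω x) ^ 2 - (t x) ^ 2))
      = -(∑ x, p x * (∑ ω, q ω * (That ω x) ^ 2))
        + 2 * ∑ x, p x * ((∑ ω, q ω * (That ω x) ^ 2) - (∑ ω, q ω * That ω x) ^ 2) := by
  have key : ∑ x, p x * ((t x - T x) * T x) = 0 := by
    rw [← Finset.sum_fiberwise_of_maps_to (g := part) (t := Finset.univ.image part)
      (fun x _ => Finset.mem_image_of_mem part (Finset.mem_univ x))]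
    apply Finset.sum_eq_zero
    intro i hi
    obtain ⟨x0, -, hx0⟩ := Finset.mem_image.mp hi
    have hfib : (Finset.univ.filter fun y => part y = i)
        = Finset.univ.filter fun y => part y = part x0 := by
      rw [hx0]
    rw [hfib]
    have hcongr : ∀ x ∈ Finset.univ.filter (fun y => part y = part x0),
        p x * ((t x - T x) * T x) = (p x * t x) * T x0 - p x * T x0 ^ 2 := by
      intro x hx
      have hpx : part x = part x0 := (Finset.mem_filter.mp hx).2
      rw [hconst x x0 hpx]; ring
    rw [Finset.sum_congr rfl hcongr, Finset.sum_sub_distrib, ← Finset.sum_mul,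
      hmean x0, ← Finset.sum_mul]
    ring
  have hE : ∀ x, (∑ ω, q ω * ((t x - That ω x) ^ 2 - (t x) ^ 2))
      = (∑ ω, q ω * (That ω x) ^ 2) - 2 * t x * T x := by
    intro x
    have : ∀ ω, q ω * ((t x - That ω x) ^ 2 - (t x) ^ 2)
        = q ω * (That ω x) ^ 2 - 2 * t x * (q ω * That ω x) := by
      intro ω; ring
    rw [Finset.sum_congr rfl (fun ω _ => this ω), Finset.sum_sub_distrib,
      ← Finset.mul_sum, hunbiased x]
  calc ∑ x, p x * (∑ ω, q ω * ((t x - That ω x) ^ 2 - (t x) ^ 2))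
      = ∑ x, (p x * ((∑ ω, q ω * (That ω x) ^ 2) - 2 * T x ^ 2)
            - 2 * (p x * ((t x - T x) * T x))) := by
        apply Finset.sum_congr rfl
        intro x _
        rw [hE x]; ring
    _ = ∑ x, p x * ((∑ ω, q ω * (That ω x) ^ 2) - 2 * T x ^ 2)
          - 2 * ∑ x, p x * ((t x - T x) * T x) := by
        rw [Finset.sum_sub_distrib, Finset.mul_sum]
    _ = ∑ x, p x * ((∑ ω, q ω * (That ω x) ^ 2) - 2 * T x ^ 2) := by
        rw [key]; ring
    _ = _ := by
        have hT2 : ∀ x, T x ^ 2 = (∑ ω, q ω * That ω x) ^ 2 := by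
          intro x; rw [hunbiased x]
        simp_rw [hT2]
        rw [Finset.mul_sum, ← Finset.sum_neg_distrib, ← Finset.sum_add_distrib]
        apply Finset.sum_congr rfl
        intro x _; ring
end

section
/- Let P and Q be probability distributions on a finite set with Q absolutely continuous covering P, w = P/Q, d₂(P‖Q) = E_{Q}[w²], and define the effective sample size ESS = N / d₂(P‖Q) for N i.i.d. samples from Q. If |g| ≤ G and T̂ = (1/N)·Σ_{i=1}^N (w(x_i) − 1)·g(x_i) with x_i i.i.d. from Q, then Var(T̂) ≤ G²·(1/ESS − 1/N). -/
/-- Theorem 2 of the paper: with ESS = N/d₂(P‖Q) and |g| ≤ G,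
the IS estimator T̂ = (1/N)·Σ (w(x_i) − 1)·g(x_i), x_i i.i.d. ∼ Q, satisfies
Var(T̂) ≤ G²·(1/ESS − 1/N). -/
theorem stmt_7 {X : Type*} [Fintype X]
    (P Q : X → ℝ) (hP : ∀ x, 0 ≤ P x) (hPsum : ∑ x, P x = 1)
    (hQ : ∀ x, 0 ≤ Q x) (hQsum : ∑ x, Q x = 1)
    (habs : ∀ x, 0 < P x → 0 < Q x)
    (w : X → ℝ) (hw : ∀ x, w x = P x / Q x)
    (d2 : ℝ) (hd2 : d2 = ∑ x, Q x * (w x) ^ 2)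
    (N : ℕ) (hN : 0 < N)
    (ESS : ℝ) (hESS : ESS = (N : ℝ) / d2)
    (g : X → ℝ) (G : ℝ) (hg : ∀ x, |g x| ≤ G)
    (Qn : (Fin N → X) → ℝ) (hQn : ∀ f, Qn f = ∏ i, Q (f i))
    (That : (Fin N → X) → ℝ)
    (hThat : ∀ f, That f = (1 / (N : ℝ)) * ∑ i, (w (f i) - 1) * g (f i)) :
    (∑ f, Qn f * (That f) ^ 2) - (∑ f, Qn f * That f) ^ 2
      ≤ G ^ 2 * (1 / ESS - 1 / N) := by
  classical
  set h : X → ℝ := fun x => (w x - 1) * g x with hh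
  set μ : ℝ := ∑ x, Q x * h x with hμ
  set S : ℝ := ∑ x, Q x * h x ^ 2 with hS
  have hNR : (0:ℝ) < N := by exact_mod_cast hN
  have swap : ∀ (ψ : Fin N → X → ℝ),
      ∑ f : Fin N → X, ∏ j, ψ j (f j) = ∏ j, ∑ x, ψ j x := by
    intro ψ
    rw [Finset.prod_univ_sum, Fintype.piFinset_univ]
  have hP0 : ∀ x, Q x = 0 → P x = 0 := by
    intro x hx
    by_contra hc
    have hp : 0 < P x := lt_of_le_of_ne (hP x) (Ne.symm hc)
    have := habs x hp
    linarith [this, hx.le]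
  have hQw : ∑ x, Q x * w x = 1 := by
    rw [← hPsum]
    apply Finset.sum_congr rfl
    intro x _
    rw [hw x]
    by_cases hx : Q x = 0
    · simp [hx, hP0 x hx]
    · field_simp
  -- first moment at coordinate i
  have m1 : ∀ i : Fin N, (∑ f : Fin N → X, (∏ j, Q (f j)) * h (f i)) = μ := by
    intro i
    have e1 : (∑ f : Fin N → X, (∏ j, Q (f j)) * h (f i))
        = ∑ f : Fin N → X, ∏ j, (Q (f j) * (if j = i then h (f j) else 1)) := by
      apply Finset.sum_congr rfl
      intro f _
      rw [Finset.prod_mul_distrib, Finset.prod_ite_eq']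
      simp
    rw [e1, swap (fun j x => Q x * (if j = i then h x else 1))]
    have e2 : ∀ j : Fin N, (∑ x, Q x * (if j = i then h x else 1))
        = if j = i then μ else 1 := by
      intro j
      by_cases hj : j = i <;> simp [hj, hμ, hQsum]
    calc (∏ j, ∑ x, Q x * (if j = i then h x else 1))
        = ∏ j, (if j = i then μ else 1) := Finset.prod_congr rfl fun j _ => e2 j
      _ = μ := by rw [Finset.prod_ite_eq']; simp
  -- diagonal second moment
  have m2d : ∀ i : Fin N, (∑ f : Fin N → X, (∏ j, Q (f j)) * (h (f i) * h (f i))) = S := by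
    intro i
    have e1 : (∑ f : Fin N → X, (∏ j, Q (f j)) * (h (f i) * h (f i)))
        = ∑ f : Fin N → X, ∏ j, (Q (f j) * (if j = i then h (f j) * h (f j) else 1)) := by
      apply Finset.sum_congr rfl
      intro f _
      rw [Finset.prod_mul_distrib, Finset.prod_ite_eq']
      simp
    rw [e1, swap (fun j x => Q x * (if j = i then h x * h x else 1))]
    have e2 : ∀ j : Fin N, (∑ x, Q x * (if j = i then h x * h x else 1))
        = if j = i then S else 1 := by
      intro j
      by_cases hj : j = i <;> simp [hj, hS, hQsum, sq]
    calc (∏ j, ∑ x, Q x * (if j = i then h x * h x else 1))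
        = ∏ j, (if j = i then S else 1) := Finset.prod_congr rfl fun j _ => e2 j
      _ = S := by rw [Finset.prod_ite_eq']; simp
  -- off-diagonal second moment
  have m2o : ∀ i k : Fin N, i ≠ k →
      (∑ f : Fin N → X, (∏ j, Q (f j)) * (h (f i) * h (f k))) = μ * μ := by
    intro i k hik
    have e1 : (∑ f : Fin N → X, (∏ j, Q (f j)) * (h (f i) * h (f k)))
        = ∑ f : Fin N → X,
            ∏ j, (Q (f j) * ((if j = i then h (f j) else 1) * (if j = k then h (f j) else 1))) := by
      apply Finset.sum_congr rfl
      intro f _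
      rw [Finset.prod_mul_distrib, Finset.prod_mul_distrib,
        Finset.prod_ite_eq', Finset.prod_ite_eq']
      simp
    rw [e1, swap (fun j x => Q x * ((if j = i then h x else 1) * (if j = k then h x else 1)))]
    have e2 : ∀ j : Fin N,
        (∑ x, Q x * ((if j = i then h x else 1) * (if j = k then h x else 1)))
        = (if j = i then μ else 1) * (if j = k then μ else 1) := by
      intro j
      by_cases hji : j = i
      · have hjk : j ≠ k := by rw [hji]; exact hik
        simp [hji, hjk, hμ, hik]
      · by_cases hjk : j = k
        · have : k ≠ i := by intro hki; exact hik (hki.symm)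
          simp [hji, hjk, hμ, this, Ne.symm hik]
        · simp [hji, hjk, hQsum]
    calc (∏ j, ∑ x, Q x * ((if j = i then h x else 1) * (if j = k then h x else 1)))
        = ∏ j, ((if j = i then μ else 1) * (if j = k then μ else 1)) :=
          Finset.prod_congr rfl fun j _ => e2 j
      _ = μ * μ := by
          rw [Finset.prod_mul_distrib, Finset.prod_ite_eq', Finset.prod_ite_eq']
          simp
  -- mean of That
  have ptw1 : ∀ f : Fin N → X, Qn f * That f
      = (1/(N:ℝ)) * ∑ i, (∏ j, Q (f j)) * h (f i) := by
    intro f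
    rw [hQn f, hThat f]
    simp only [Finset.mul_sum]
    apply Finset.sum_congr rfl
    intro i _
    simp only [hh]
    ring
  have E1 : (∑ f, Qn f * That f) = μ := by
    have e : (∑ f : Fin N → X, Qn f * That f)
        = ∑ f : Fin N → X, (1/(N:ℝ)) * ∑ i, (∏ j, Q (f j)) * h (f i) :=
      Finset.sum_congr rfl fun f _ => ptw1 f
    rw [e, ← Finset.mul_sum, Finset.sum_comm]
    have e2 : (∑ i : Fin N, ∑ f : Fin N → X, (∏ j, Q (f j)) * h (f i))
        = ∑ i : Fin N, μ := Finset.sum_congr rfl fun i _ => m1 i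
    rw [e2, Finset.sum_const, Finset.card_univ, Fintype.card_fin, nsmul_eq_mul]
    field_simp
  -- second moment of That
  have ptw2 : ∀ f : Fin N → X, Qn f * (That f) ^ 2
      = (1/(N:ℝ))^2 * ∑ i, ∑ k, (∏ j, Q (f j)) * (h (f i) * h (f k)) := by
    intro f
    rw [hQn f, hThat f, mul_pow, sq (∑ i, (w (f i) - 1) * g (f i)), Finset.sum_mul_sum]
    simp only [Finset.mul_sum]
    apply Finset.sum_congr rfl
    intro i _
    apply Finset.sum_congr rfl
    intro k _
    simp only [hh]
    ring
  have E2 : (∑ f, Qn f * (That f) ^ 2)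
      = (1/(N:ℝ))^2 * ((N:ℝ) * S + ((N:ℝ)^2 - (N:ℝ)) * μ^2) := by
    have e : (∑ f : Fin N → X, Qn f * (That f) ^ 2)
        = ∑ f : Fin N → X, (1/(N:ℝ))^2 * ∑ i, ∑ k, (∏ j, Q (f j)) * (h (f i) * h (f k)) :=
      Finset.sum_congr rfl fun f _ => ptw2 f
    rw [e, ← Finset.mul_sum, Finset.sum_comm]
    congr 1
    have inner : ∀ i : Fin N,
        (∑ f : Fin N → X, ∑ k : Fin N, (∏ j, Q (f j)) * (h (f i) * h (f k)))
        = S + ((N:ℝ) - 1) * μ^2 := by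
      intro i
      rw [Finset.sum_comm]
      have e3 : ∀ k : Fin N, (∑ f : Fin N → X, (∏ j, Q (f j)) * (h (f i) * h (f k)))
          = μ * μ + (if i = k then S - μ * μ else 0) := by
        intro k
        by_cases hik : i = k
        · subst hik
          simp [m2d i]
        · simp [hik, m2o i k hik]
      rw [Finset.sum_congr rfl fun k _ => e3 k, Finset.sum_add_distrib,
        Finset.sum_ite_eq, Finset.sum_const, Finset.card_univ, Fintype.card_fin,
        nsmul_eq_mul]
      simp
      ring
    rw [Finset.sum_congr rfl fun i _ => inner i, Finset.sum_const, Finset.card_univ,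
      Fintype.card_fin, nsmul_eq_mul]
    ring
  -- variance identity
  have Hvar : (∑ f, Qn f * (That f) ^ 2) - (∑ f, Qn f * That f) ^ 2
      = (S - μ^2) / N := by
    rw [E1, E2]
    field_simp
    ring
  rw [Hvar]
  -- bounds on S, d2
  have hXne : (Finset.univ : Finset X).Nonempty := by
    by_contra hc
    rw [Finset.not_nonempty_iff_eq_empty] at hc
    rw [hc] at hPsum
    simp at hPsum
  obtain ⟨x0, _⟩ := hXne
  have hG : 0 ≤ G := le_trans (abs_nonneg _) (hg x0)
  have hSbound : S ≤ G^2 * (d2 - 1) := by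
    have step : S ≤ ∑ x, Q x * ((w x - 1)^2 * G^2) := by
      apply Finset.sum_le_sum
      intro x _
      apply mul_le_mul_of_nonneg_left _ (hQ x)
      have : h x ^ 2 = (w x - 1)^2 * (g x)^2 := by simp only [hh]; ring
      rw [this]
      apply mul_le_mul_of_nonneg_left _ (sq_nonneg _)
      calc (g x)^2 = |g x|^2 := (sq_abs _).symm
        _ ≤ G^2 := by
            apply pow_le_pow_left₀ (abs_nonneg _) (hg x)
    have expand : (∑ x, Q x * ((w x - 1)^2 * G^2))
        = G^2 * ((∑ x, Q x * (w x)^2) - 2 * (∑ x, Q x * w x) + (∑ x, Q x)) := by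
      simp only [mul_sub, mul_add, Finset.mul_sum]
      rw [← Finset.sum_sub_distrib, ← Finset.sum_add_distrib]
      apply Finset.sum_congr rfl
      intro x _
      ring
    rw [expand, ← hd2, hQw, hQsum] at step
    calc S ≤ G^2 * (d2 - 2 * 1 + 1) := step
      _ = G^2 * (d2 - 1) := by ring
  have hd2ge1 : 1 ≤ d2 := by
    have cs := Finset.sum_mul_sq_le_sq_mul_sq Finset.univ
      (fun x => Real.sqrt (Q x)) (fun x => Real.sqrt (Q x) * w x)
    have e1 : (∑ x, Real.sqrt (Q x) * (Real.sqrt (Q x) * w x)) = ∑ x, Q x * w x := by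
      apply Finset.sum_congr rfl
      intro x _
      rw [← mul_assoc, Real.mul_self_sqrt (hQ x)]
    have e2 : (∑ x, (Real.sqrt (Q x))^2) = ∑ x, Q x := by
      apply Finset.sum_congr rfl
      intro x _
      rw [Real.sq_sqrt (hQ x)]
    have e3 : (∑ x, (Real.sqrt (Q x) * w x)^2) = ∑ x, Q x * (w x)^2 := by
      apply Finset.sum_congr rfl
      intro x _
      rw [mul_pow, Real.sq_sqrt (hQ x)]
    rw [e1, e2, e3, hQw, hQsum, one_mul, ← hd2] at cs
    simpa using cs
  have hd2pos : 0 < d2 := lt_of_lt_of_le one_pos hd2ge1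
  have hrhs : G ^ 2 * (1 / ESS - 1 / N) = G^2 * (d2 - 1) / N := by
    rw [hESS, one_div_div]
    field_simp
  rw [hrhs]
  have hnum : S - μ^2 ≤ G^2 * (d2 - 1) := by nlinarith [sq_nonneg μ]
  exact (div_le_div_iff_of_pos_right hNR).mpr hnum
end
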